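/- arXiv:1604.08657 — 2 statements merged into one kernel-verified Lean document; each statement's English description precedes it below -/
import Mathlib

section
/- Let k, ℓ ≥ 2. Any set of C(k+ℓ-4, k-2) + 1 points in the plane in general position, with all x-coordinates distinct, contains a k-cup or an ℓ-cap. -/
/-- Signed area determinant: positive iff `c` is to the left of the directed line `a → b`. -/
def det2 (a b c : ℝ × ℝ) : ℝ :=
  (b.1 - a.1) * (c.2 - a.2) - (b.2 - a.2) * (c.1 - a.1)

/-- A planar point set is in general position if no three of its points are collinear. -/
def GenPos (S : Set (ℝ × ℝ)) : Prop :=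
  ∀ p ∈ S, ∀ q ∈ S, ∀ r ∈ S, p ≠ q → p ≠ r → q ≠ r →
    ¬ Collinear ℝ ({p, q, r} : Set (ℝ × ℝ))

/-- A planar point set is in convex position if every point is a vertex of the convex hull,
i.e. no point lies in the convex hull of the others. -/
def ConvexPos (S : Set (ℝ × ℝ)) : Prop :=
  ∀ p ∈ S, p ∉ convexHull ℝ (S \ {p})

/-- Slope of the segment from `p` to `q`. -/
noncomputable def slope2 (p q : ℝ × ℝ) : ℝ := (q.2 - p.2) / (q.1 - p.1)

/-- `f 0, …, f (m-1)` is an m-cup: x-coordinates strictly increasing and slopes of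
consecutive segments strictly increasing. -/
def IsCupSeq (m : ℕ) (f : ℕ → ℝ × ℝ) : Prop :=
  (∀ i j, i < j → j < m → (f i).1 < (f j).1) ∧
  (∀ i, i + 2 < m → slope2 (f i) (f (i + 1)) < slope2 (f (i + 1)) (f (i + 2)))

/-- `f 0, …, f (m-1)` is an m-cap: x-coordinates strictly increasing and slopes of
consecutive segments strictly decreasing. -/
def IsCapSeq (m : ℕ) (f : ℕ → ℝ × ℝ) : Prop :=
  (∀ i j, i < j → j < m → (f i).1 < (f j).1) ∧
  (∀ i, i + 2 < m → slope2 (f (i + 1)) (f (i + 2)) < slope2 (f i) (f (i + 1)))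

/-!
Induction on `k + ℓ` through the recursion `N(k, ℓ) ≤ N(k - 1, ℓ) + N(k, ℓ - 1) - 1`, where
`N(k, ℓ) = C(k + ℓ - 4, k - 2) + 1`. Let `E` be the set of points that end a `(k - 1)`-cup.
Then `P \ E` contains no `(k - 1)`-cup, so if it is large it contains an `ℓ`-cap. Otherwise `E`
is large and contains a `k`-cup or an `(ℓ - 1)`-cap; the first point of such a cap ends a
`(k - 1)`-cup, and since the three points around the junction are not collinear, either the cup
extends to a `k`-cup or the cap extends to an `ℓ`-cap.
-/

open Finset

def HasCup (P : Finset (ℝ × ℝ)) (m : ℕ) : Prop :=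
  ∃ f : ℕ → ℝ × ℝ, (∀ i < m, f i ∈ P) ∧ IsCupSeq m f

def HasCap (P : Finset (ℝ × ℝ)) (m : ℕ) : Prop :=
  ∃ f : ℕ → ℝ × ℝ, (∀ i < m, f i ∈ P) ∧ IsCapSeq m f

lemma HasCup.mono {P Q : Finset (ℝ × ℝ)} {m : ℕ} (h : HasCup P m) (hPQ : P ⊆ Q) :
    HasCup Q m :=
  let ⟨f, hf, hcup⟩ := h
  ⟨f, fun i hi => hPQ (hf i hi), hcup⟩

lemma HasCap.mono {P Q : Finset (ℝ × ℝ)} {m : ℕ} (h : HasCap P m) (hPQ : P ⊆ Q) :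
    HasCap Q m :=
  let ⟨f, hf, hcap⟩ := h
  ⟨f, fun i hi => hPQ (hf i hi), hcap⟩

lemma GenPos.mono {S T : Set (ℝ × ℝ)} (h : GenPos T) (hST : S ⊆ T) : GenPos S :=
  fun p hp q hq r hr => h p (hST hp) q (hST hq) r (hST hr)

lemma slope2_ne_of_not_collinear {p q r : ℝ × ℝ} (hpq : p.1 ≠ q.1) (hqr : q.1 ≠ r.1)
    (hcol : ¬ Collinear ℝ ({p, q, r} : Set (ℝ × ℝ))) : slope2 p q ≠ slope2 q r := by
  intro h
  apply hcol
  have hpq' : q.1 - p.1 ≠ 0 := sub_ne_zero.mpr hpq.symm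
  have hqr' : r.1 - q.1 ≠ 0 := sub_ne_zero.mpr hqr.symm
  have hcross : (q.2 - p.2) * (r.1 - q.1) = (r.2 - q.2) * (q.1 - p.1) :=
    (div_eq_div_iff hpq' hqr').mp h
  rw [collinear_iff_exists_forall_eq_smul_vadd]
  refine ⟨p, q - p, ?_⟩
  rintro x (rfl | rfl | rfl)
  · exact ⟨0, by simp⟩
  · exact ⟨1, by simp⟩
  · refine ⟨(x.1 - p.1) / (q.1 - p.1), Prod.ext ?_ ?_⟩
    · simp only [vadd_eq_add, Prod.fst_add, Prod.smul_fst, Prod.fst_sub, smul_eq_mul]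
      field_simp
      ring
    · simp only [vadd_eq_add, Prod.snd_add, Prod.smul_snd, Prod.snd_sub, smul_eq_mul]
      field_simp
      linear_combination -hcross

lemma exists_fst_lt {P : Finset (ℝ × ℝ)} (hP : 1 < #P)
    (hx : ∀ p ∈ P, ∀ q ∈ P, p ≠ q → p.1 ≠ q.1) : ∃ p ∈ P, ∃ q ∈ P, p.1 < q.1 := by
  obtain ⟨p, hp, q, hq, hpq⟩ := one_lt_card.mp hP
  rcases (hx p hp q hq hpq).lt_or_gt with h | h
  exacts [⟨p, hp, q, hq, h⟩, ⟨q, hq, p, hp, h⟩]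

lemma isCupSeq_two {p q : ℝ × ℝ} (h : p.1 < q.1) : IsCupSeq 2 (fun | 0 => p | _ => q) := by
  refine ⟨fun i j hij hj => ?_, fun i hi => by omega⟩
  obtain ⟨rfl, rfl⟩ : i = 0 ∧ j = 1 := by omega
  exact h

lemma isCapSeq_two {p q : ℝ × ℝ} (h : p.1 < q.1) : IsCapSeq 2 (fun | 0 => p | _ => q) := by
  refine ⟨fun i j hij hj => ?_, fun i hi => by omega⟩
  obtain ⟨rfl, rfl⟩ : i = 0 ∧ j = 1 := by omega
  exact h

lemma hasCup_two {P : Finset (ℝ × ℝ)} (hP : 1 < #P)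
    (hx : ∀ p ∈ P, ∀ q ∈ P, p ≠ q → p.1 ≠ q.1) : HasCup P 2 := by
  obtain ⟨p, hp, q, hq, h⟩ := exists_fst_lt hP hx
  exact ⟨_, fun i _ => by cases i <;> assumption, isCupSeq_two h⟩

lemma hasCap_two {P : Finset (ℝ × ℝ)} (hP : 1 < #P)
    (hx : ∀ p ∈ P, ∀ q ∈ P, p ≠ q → p.1 ≠ q.1) : HasCap P 2 := by
  obtain ⟨p, hp, q, hq, h⟩ := exists_fst_lt hP hx
  exact ⟨_, fun i _ => by cases i <;> assumption, isCapSeq_two h⟩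

lemma IsCupSeq.snoc {n : ℕ} {f : ℕ → ℝ × ℝ} {q : ℝ × ℝ} (hf : IsCupSeq (n + 2) f)
    (hx : (f (n + 1)).1 < q.1) (hs : slope2 (f n) (f (n + 1)) < slope2 (f (n + 1)) q) :
    IsCupSeq (n + 3) (Function.update f (n + 2) q) := by
  constructor
  · intro i j hij hj
    rw [Function.update_of_ne (by omega)]
    rcases (show j < n + 2 ∨ j = n + 2 by omega) with hj | rfl
    · rw [Function.update_of_ne (by omega)]
      exact hf.1 i j hij hj
    · rw [Function.update_self]
      rcases (show i < n + 1 ∨ i = n + 1 by omega) with hi | rfl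
      · exact (hf.1 i (n + 1) hi (by omega)).trans hx
      · exact hx
  · intro i hi
    rw [Function.update_of_ne (by omega), Function.update_of_ne (by omega)]
    rcases (show i + 2 < n + 2 ∨ i = n by omega) with hi | rfl
    · rw [Function.update_of_ne (by omega)]
      exact hf.2 i hi
    · rw [Function.update_self]
      exact hs

lemma IsCapSeq.cons {n : ℕ} {g : ℕ → ℝ × ℝ} {p : ℝ × ℝ} (hg : IsCapSeq (n + 2) g)
    (hx : p.1 < (g 0).1) (hs : slope2 (g 0) (g 1) < slope2 p (g 0)) :
    IsCapSeq (n + 3) (fun | 0 => p | i + 1 => g i) := by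
  constructor
  · rintro (_ | i) (_ | j) hij hj
    · omega
    · rcases j.eq_zero_or_pos with rfl | hj
      · exact hx
      · exact hx.trans (hg.1 0 j hj (by omega))
    · omega
    · exact hg.1 i j (by omega) (by omega)
  · rintro (_ | i) hi
    · exact hs
    · exact hg.2 i (by omega)

lemma hasCup_or_hasCap_of_cup_last_eq_cap_head {P : Finset (ℝ × ℝ)} {n m : ℕ}
    {c g : ℕ → ℝ × ℝ} (hgp : GenPos (P : Set (ℝ × ℝ)))
    (hc : ∀ i < n + 2, c i ∈ P) (hcup : IsCupSeq (n + 2) c)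
    (hg : ∀ i < m + 2, g i ∈ P) (hcap : IsCapSeq (m + 2) g) (hcg : c (n + 1) = g 0) :
    HasCup P (n + 3) ∨ HasCap P (m + 3) := by
  have hx₁ : (c n).1 < (g 0).1 := hcg ▸ hcup.1 n (n + 1) (by omega) (by omega)
  have hx₂ : (g 0).1 < (g 1).1 := hcap.1 0 1 (by omega) (by omega)
  have hnc : ¬ Collinear ℝ ({c n, g 0, g 1} : Set (ℝ × ℝ)) :=
    hgp _ (hc n (by omega)) _ (hg 0 (by omega)) _ (hg 1 (by omega))
      (fun h => hx₁.ne (congrArg Prod.fst h)) (fun h => (hx₁.trans hx₂).ne (congrArg Prod.fst h))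
      (fun h => hx₂.ne (congrArg Prod.fst h))
  rcases (slope2_ne_of_not_collinear hx₁.ne hx₂.ne hnc).lt_or_gt with hlt | hgt
  · refine Or.inl ⟨_, fun i hi => ?_, hcup.snoc (by rwa [hcg]) (by rwa [hcg])⟩
    rcases eq_or_ne i (n + 2) with rfl | hne
    · rw [Function.update_self]
      exact hg 1 (by omega)
    · rw [Function.update_of_ne hne]
      exact hc i (by omega)
  · refine Or.inr ⟨_, fun i hi => ?_, hcap.cons hx₁ hgt⟩
    cases i
    · exact hc n (by omega)
    · exact hg _ (by omega)

lemma hasCup_or_hasCap_of_pascal {a b : ℕ} {P : Finset (ℝ × ℝ)}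
    (hgp : GenPos (P : Set (ℝ × ℝ)))
    (hcard : (a + b + 1).choose a + (a + b + 1).choose (a + 1) < #P)
    (ih_cup : ∀ Q ⊆ P, (a + b + 1).choose a < #Q → HasCup Q (a + 2) ∨ HasCap Q (b + 3))
    (ih_cap : ∀ Q ⊆ P, (a + b + 1).choose (a + 1) < #Q → HasCup Q (a + 3) ∨ HasCap Q (b + 2)) :
    HasCup P (a + 3) ∨ HasCap P (b + 3) := by
  classical
  set E := {p ∈ P | ∃ c, (∀ i < a + 2, c i ∈ P) ∧ IsCupSeq (a + 2) c ∧ c (a + 1) = p}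
  have hEP : E ⊆ P := filter_subset _ _
  by_cases hD : (a + b + 1).choose a < #(P \ E)
  · rcases ih_cup _ sdiff_subset hD with ⟨c, hc, hcup⟩ | hcap
    · have hlast := mem_sdiff.mp (hc (a + 1) (by omega))
      exact absurd (mem_filter.mpr ⟨hlast.1, c, fun i hi => (mem_sdiff.mp (hc i hi)).1, hcup, rfl⟩)
        hlast.2
    · exact Or.inr (hcap.mono sdiff_subset)
  · have hE : (a + b + 1).choose (a + 1) < #E := by
      have := card_sdiff_add_card_eq_card hEP
      omega
    rcases ih_cap E hEP hE with hcup | ⟨g, hg, hcap⟩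
    · exact Or.inl (hcup.mono hEP)
    · obtain ⟨c, hc, hcup, hcg⟩ := (mem_filter.mp (hg 0 (by omega))).2
      exact hasCup_or_hasCap_of_cup_last_eq_cap_head hgp hc hcup (fun i hi => hEP (hg i hi))
        hcap hcg

theorem hasCup_or_hasCap_of_choose_lt (a b : ℕ) (P : Finset (ℝ × ℝ))
    (hgp : GenPos (P : Set (ℝ × ℝ))) (hx : ∀ p ∈ P, ∀ q ∈ P, p ≠ q → p.1 ≠ q.1)
    (hcard : (a + b).choose a < #P) : HasCup P (a + 2) ∨ HasCap P (b + 2) := by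
  induction a generalizing b P with
  | zero => exact Or.inl (hasCup_two (by simpa using hcard) hx)
  | succ a iha =>
    induction b generalizing P with
    | zero => exact Or.inr (hasCap_two (by simpa using hcard) hx)
    | succ b ihb =>
      refine hasCup_or_hasCap_of_pascal hgp ?_
        (fun Q hQ hQc => iha (b + 1) Q (hgp.mono (coe_subset.mpr hQ))
          (fun p hp q hq => hx p (hQ hp) q (hQ hq)) hQc)
        (fun Q hQ hQc => ihb Q (hgp.mono (coe_subset.mpr hQ))
          (fun p hp q hq => hx p (hQ hp) q (hQ hq)) (by rwa [Nat.add_right_comm]))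
      rwa [show a + 1 + (b + 1) = a + b + 1 + 1 by ring, Nat.choose_succ_succ] at hcard

/-- Erdős–Szekeres cups–caps theorem (upper bound): any C(k+ℓ-4, k-2)+1 points in
general position with distinct x-coordinates contain a k-cup or an ℓ-cap. -/
theorem stmt_2 (k l : ℕ) (hk : 2 ≤ k) (hl : 2 ≤ l) (P : Finset (ℝ × ℝ))
    (hcard : P.card = Nat.choose (k + l - 4) (k - 2) + 1)
    (hgp : GenPos (P : Set (ℝ × ℝ)))
    (hx : ∀ p ∈ P, ∀ q ∈ P, p ≠ q → p.1 ≠ q.1) :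
    (∃ f : ℕ → ℝ × ℝ, (∀ i < k, f i ∈ P) ∧ IsCupSeq k f) ∨
    (∃ f : ℕ → ℝ × ℝ, (∀ i < l, f i ∈ P) ∧ IsCapSeq l f) := by
  obtain ⟨a, rfl⟩ : ∃ a, k = a + 2 := ⟨k - 2, by omega⟩
  obtain ⟨b, rfl⟩ : ∃ b, l = b + 2 := ⟨l - 2, by omega⟩
  refine hasCup_or_hasCap_of_choose_lt a b P hgp hx ?_
  rw [hcard, show a + 2 + (b + 2) - 4 = a + b by omega, Nat.add_sub_cancel]
  exact Nat.lt_succ_self _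
end

section
/- Every 5 points in the plane in general position contain 4 points in convex position. -/
/-!
Fix a point `z`. If the other four points are not in convex position, one of them, `w`, lies in
the triangle spanned by the remaining three. If the four points other than `w` are not in convex
position either, one of them, `x`, lies in the triangle `T` spanned by the other three, and then
`T` contains `w` as well. Of the three vertices of `T`, none on the line `wx`, two, `u` and `v`,
lie on the same side of it, and `u, v, w, x` are in convex position.
-/

section ConvexHull

variable {𝕜 E : Type*} [Semiring 𝕜] [PartialOrder 𝕜] [AddCommMonoid E] [Module 𝕜 E]

theorem convexHull_sdiff_singleton_of_mem {s : Set E} {x : E}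
    (hx : x ∈ convexHull 𝕜 (s \ {x})) : convexHull 𝕜 (s \ {x}) = convexHull 𝕜 s := by
  refine (convexHull_mono Set.sdiff_subset).antisymm
    (convexHull_min (fun y hy => ?_) (convex_convexHull 𝕜 _))
  by_cases hyx : y = x
  · exact hyx ▸ hx
  · exact subset_convexHull 𝕜 _ ⟨hy, hyx⟩

end ConvexHull

theorem Finset.exists_eq_triple_of_card_eq_three {α : Type*} [DecidableEq α] {T : Finset α}
    (hT : T.card = 3) {u v : α} (hu : u ∈ T) (hv : v ∈ T) (huv : u ≠ v) :
    ∃ w, u ≠ w ∧ v ≠ w ∧ T = {u, v, w} := by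
  have hv' : v ∈ T.erase u := mem_erase.2 ⟨huv.symm, hv⟩
  obtain ⟨w, hw⟩ := card_eq_one.mp <| by
    rw [card_erase_of_mem hv', card_erase_of_mem hu, hT]
  have hw' : w ∈ (T.erase u).erase v := hw ▸ mem_singleton_self w
  refine ⟨w, (ne_of_mem_erase (mem_of_mem_erase hw')).symm, (ne_of_mem_erase hw').symm, ?_⟩
  rw [← hw, insert_erase hv', insert_erase hu]

theorem Finset.exists_ne_mul_pos_of_two_lt_card {α : Type*} {T : Finset α} (hT : 2 < T.card)
    {f : α → ℝ} (hf : ∀ x ∈ T, f x ≠ 0) : ∃ u ∈ T, ∃ v ∈ T, u ≠ v ∧ 0 < f u * f v := by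
  obtain ⟨u, hu, v, hv, huv, hsign⟩ := exists_ne_map_eq_of_card_lt_of_maps_to
    (t := (univ : Finset Bool)) (f := fun x => decide (0 < f x)) (by simpa using hT)
    (fun _ _ => mem_univ _)
  refine ⟨u, hu, v, hv, huv, mul_pos_iff.2 ?_⟩
  simp only [decide_eq_decide] at hsign
  rcases (hf u hu).lt_or_gt with h | h
  · exact Or.inr ⟨h, lt_of_le_of_ne (not_lt.1 (hsign.not.1 h.not_gt)) (hf v hv)⟩
  · exact Or.inl ⟨h, hsign.1 h⟩

@[simp] lemma det2_self_left (p q : ℝ × ℝ) : det2 p q p = 0 := by simp [det2]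
@[simp] lemma det2_self_right (p q : ℝ × ℝ) : det2 p q q = 0 := by simp only [det2]; ring

lemma det2_swap (a b c : ℝ × ℝ) : det2 b a c = - det2 a b c := by simp only [det2]; ring
lemma det2_rotate (a b c : ℝ × ℝ) : det2 b c a = det2 a b c := by simp only [det2]; ring

lemma det2_smul_add_smul_add_smul (p q a b c : ℝ × ℝ) {α β γ : ℝ} (h : α + β + γ = 1) :
    det2 p q (α • a + β • b + γ • c) = α * det2 p q a + β * det2 p q b + γ * det2 p q c := by
  obtain rfl : γ = 1 - α - β := by linarith
  simp only [det2, Prod.fst_add, Prod.snd_add, Prod.smul_fst, Prod.smul_snd, smul_eq_mul]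
  ring

lemma collinear_of_det2_eq_zero {p q r : ℝ × ℝ} (hpq : p ≠ q) (h : det2 p q r = 0) :
    Collinear ℝ ({p, q, r} : Set (ℝ × ℝ)) := by
  have hd : (q.1 - p.1) ^ 2 + (q.2 - p.2) ^ 2 ≠ 0 := by
    intro h0
    exact hpq (Prod.ext (by nlinarith) (by nlinarith))
  rw [collinear_iff_of_mem (Set.mem_insert p _)]
  refine ⟨q - p, ?_⟩
  rintro x (rfl | rfl | rfl)
  · exact ⟨0, by simp⟩
  · exact ⟨1, by simp⟩
  · -- `x - p` is its own orthogonal projection onto `q - p`, because `det2 p q x = 0`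
    refine ⟨((x.1 - p.1) * (q.1 - p.1) + (x.2 - p.2) * (q.2 - p.2)) /
      ((q.1 - p.1) ^ 2 + (q.2 - p.2) ^ 2), Prod.ext ?_ ?_⟩ <;>
    simp only [det2] at h <;>
    simp only [vadd_eq_add, Prod.fst_add, Prod.snd_add, Prod.smul_fst, Prod.smul_snd,
      Prod.fst_sub, Prod.snd_sub, smul_eq_mul] <;>
    field_simp
    · linear_combination (p.2 - q.2) * h
    · linear_combination (q.1 - p.1) * h

lemma exists_eq_smul_add_smul_add_smul_of_mem_convexHull_triple {a b c x : ℝ × ℝ}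
    (hx : x ∈ convexHull ℝ ({a, b, c} : Set (ℝ × ℝ))) :
    ∃ α β γ : ℝ, 0 ≤ α ∧ 0 ≤ β ∧ 0 ≤ γ ∧ α + β + γ = 1 ∧ x = α • a + β • b + γ • c := by
  rw [convexHull_insert (Set.insert_nonempty b {c}), convexHull_pair, mem_convexJoin] at hx
  obtain ⟨_, rfl, y, ⟨s, t, hs, ht, hst, rfl⟩, ⟨α, r, hα, hr, hαr, rfl⟩⟩ := hx
  refine ⟨α, r * s, r * t, hα, by positivity, by positivity, by linear_combination r * hst + hαr,
    ?_⟩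
  simp only [smul_add, smul_smul, add_assoc]

lemma GenPos.det2_ne_zero {S : Set (ℝ × ℝ)} (h : GenPos S) {p q r : ℝ × ℝ} (hp : p ∈ S)
    (hq : q ∈ S) (hr : r ∈ S) (hpq : p ≠ q) (hpr : p ≠ r) (hqr : q ≠ r) : det2 p q r ≠ 0 :=
  fun h0 => h p hp q hq r hr hpq hpr hqr (collinear_of_det2_eq_zero hpq h0)

lemma convexPos_of_notMem_convexHull {a b c d : ℝ × ℝ}
    (ha : a ∉ convexHull ℝ {b, c, d}) (hb : b ∉ convexHull ℝ {a, c, d})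
    (hc : c ∉ convexHull ℝ {a, b, d}) (hd : d ∉ convexHull ℝ {a, b, c}) :
    ConvexPos {a, b, c, d} := by
  have hmono {s t : Set (ℝ × ℝ)} {x : ℝ × ℝ} (hx : x ∉ convexHull ℝ t) (hst : s ⊆ insert x t) :
      x ∉ convexHull ℝ (s \ {x}) :=
    fun h => hx (convexHull_mono (Set.sdiff_singleton_subset_iff.2 hst) h)
  rintro x (rfl | rfl | rfl | rfl)
  all_goals refine hmono ‹_› fun y => ?_
  all_goals simp only [Set.mem_insert_iff, Set.mem_singleton_iff]; tauto

lemma vertex_notMem_convexHull {u v w p q : ℝ × ℝ} (hu : det2 v w u ≠ 0)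
    (hpqu : det2 p q u ≠ 0) (hp : p ∈ convexHull ℝ {u, v, w}) (hq : q ∈ convexHull ℝ {u, v, w}) :
    u ∉ convexHull ℝ {v, p, q} := by
  intro hu'
  obtain ⟨β, γ, δ, hβ, hγ, hδ, hsum, hue⟩ :=
    exists_eq_smul_add_smul_add_smul_of_mem_convexHull_triple hu'
  obtain ⟨a, a', a'', ha, ha', ha'', hasum, hpe⟩ :=
    exists_eq_smul_add_smul_add_smul_of_mem_convexHull_triple hp
  obtain ⟨b, b', b'', hb, hb', hb'', hbsum, hqe⟩ :=
    exists_eq_smul_add_smul_add_smul_of_mem_convexHull_triple hq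
  have hpqu' := det2_smul_add_smul_add_smul p q v p q hsum
  have hvwu := det2_smul_add_smul_add_smul v w v p q hsum
  have hvwp := det2_smul_add_smul_add_smul v w u v w hasum
  have hvwq := det2_smul_add_smul_add_smul v w u v w hbsum
  simp only [← hue, ← hpe, ← hqe, det2_self_left, det2_self_right, mul_zero, add_zero,
    zero_add] at hpqu' hvwu hvwp hvwq
  -- `det2 v w · / det2 v w u` is the barycentric coordinate at `u`: it is `a ≤ 1` at `p`,
  -- `b ≤ 1` at `q` and `0` at `v`, so the weight `β > 0` on `v` keeps it below `1` at `u`.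
  have hβ0 : 0 < β := lt_of_le_of_ne hβ (by rintro rfl; simp [hpqu'] at hpqu)
  have hcoord : γ * a + δ * b = 1 := by
    rw [hvwp, hvwq] at hvwu
    exact (mul_left_cancel₀ hu (by linear_combination hvwu)).symm
  nlinarith

lemma notMem_convexHull_of_det2_mul_pos {u v p q : ℝ × ℝ} (hpq : p ≠ q)
    (hside : 0 < det2 p q u * det2 p q v) : p ∉ convexHull ℝ {u, v, q} := by
  intro hp
  obtain ⟨α, β, γ, hα, hβ, hγ, hsum, hpe⟩ :=
    exists_eq_smul_add_smul_add_smul_of_mem_convexHull_triple hp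
  have h := det2_smul_add_smul_add_smul p q u v q hsum
  rw [← hpe, det2_self_left, det2_self_right, mul_zero, add_zero] at h
  have hu : det2 p q u ≠ 0 := left_ne_zero_of_mul hside.ne'
  have h' : α * (det2 p q u * det2 p q u) + β * (det2 p q u * det2 p q v) = 0 := by
    linear_combination -(det2 p q u) * h
  have hu2 := mul_self_pos.2 hu
  have hα0 : α = 0 := by nlinarith [mul_nonneg hα hu2.le, mul_nonneg hβ hside.le]
  have hβ0 : β = 0 := by nlinarith [mul_nonneg hα hu2.le, mul_nonneg hβ hside.le]
  obtain rfl : γ = 1 := by linarith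
  simp [hα0, hβ0, hpq] at hpe

lemma convexPos_of_det2_mul_pos {u v w p q : ℝ × ℝ} (huvw : det2 u v w ≠ 0)
    (hp : p ∈ convexHull ℝ {u, v, w}) (hq : q ∈ convexHull ℝ {u, v, w}) (hpq : p ≠ q)
    (hside : 0 < det2 p q u * det2 p q v) : ConvexPos {u, v, p, q} := by
  have hpqu : det2 p q u ≠ 0 := left_ne_zero_of_mul hside.ne'
  have hpqv : det2 p q v ≠ 0 := right_ne_zero_of_mul hside.ne'
  rw [Set.insert_comm u v] at hp hq
  refine convexPos_of_notMem_convexHull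
    (vertex_notMem_convexHull (by rwa [det2_rotate]) hpqu ?_ ?_)
    (vertex_notMem_convexHull (by rwa [det2_rotate, det2_swap, neg_ne_zero]) hpqv hp hq)
    (notMem_convexHull_of_det2_mul_pos hpq hside)
    (notMem_convexHull_of_det2_mul_pos hpq.symm (by rwa [det2_swap, det2_swap p, neg_mul_neg]))
  all_goals rwa [Set.insert_comm u v]

lemma exists_convexPos_of_two_mem_convexHull {P T : Finset (ℝ × ℝ)} (hgp : GenPos ↑P)
    (hTP : T ⊆ P) (hT : T.card = 3) {p q : ℝ × ℝ} (hpP : p ∈ P) (hqP : q ∈ P) (hpq : p ≠ q)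
    (hpT : p ∉ T) (hqT : q ∉ T) (hp : p ∈ convexHull ℝ ↑T) (hq : q ∈ convexHull ℝ ↑T) :
    ∃ S ⊆ P, S.card = 4 ∧ ConvexPos ↑S := by
  classical
  have hne {x y : ℝ × ℝ} (hx : x ∈ T) (hy : y ∉ T) : x ≠ y := fun h => hy (h ▸ hx)
  obtain ⟨u, hu, v, hv, huv, hside⟩ :=
    Finset.exists_ne_mul_pos_of_two_lt_card (f := det2 p q) (by omega) fun x hx =>
      hgp.det2_ne_zero hpP hqP (hTP hx) hpq (hne hx hpT).symm (hne hx hqT).symm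
  obtain ⟨w, huw, hvw, rfl⟩ := Finset.exists_eq_triple_of_card_eq_three hT hu hv huv
  have hw : w ∈ ({u, v, w} : Finset (ℝ × ℝ)) := by simp
  refine ⟨{u, v, p, q}, ?_, ?_, ?_⟩
  · simp [Finset.insert_subset_iff, hTP hu, hTP hv, hpP, hqP]
  · rw [Finset.card_insert_of_notMem, Finset.card_insert_of_notMem, Finset.card_pair hpq]
    · simp [hne hv hpT, hne hv hqT]
    · simp [huv, hne hu hpT, hne hu hqT]
  · push_cast at hp hq ⊢
    exact convexPos_of_det2_mul_pos
      (hgp.det2_ne_zero (hTP hu) (hTP hv) (hTP hw) huv huw hvw) hp hq hpq hside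

lemma exists_mem_convexHull_erase_of_not_convexPos {S : Finset (ℝ × ℝ)} (h : ¬ ConvexPos ↑S) :
    ∃ x ∈ S, x ∈ convexHull ℝ ↑(S.erase x) := by
  classical
  simpa [ConvexPos, Finset.coe_erase] using h

/-- Any 5 points in general position contain 4 points in convex position. -/
theorem stmt_19 (P : Finset (ℝ × ℝ)) (hcard : P.card = 5)
    (hgp : GenPos (P : Set (ℝ × ℝ))) :
    ∃ S ⊆ P, S.card = 4 ∧ ConvexPos (S : Set (ℝ × ℝ)) := by
  classical
  obtain ⟨z, hz⟩ : P.Nonempty := Finset.card_pos.mp (by omega)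
  by_cases hQ : ConvexPos ↑(P.erase z)
  · exact ⟨_, P.erase_subset z, by rw [Finset.card_erase_of_mem hz, hcard], hQ⟩
  obtain ⟨w, hwQ, hw⟩ := exists_mem_convexHull_erase_of_not_convexPos hQ
  have hwP := Finset.mem_of_mem_erase hwQ
  by_cases hR : ConvexPos ↑(P.erase w)
  · exact ⟨_, P.erase_subset w, by rw [Finset.card_erase_of_mem hwP, hcard], hR⟩
  obtain ⟨x, hxR, hx⟩ := exists_mem_convexHull_erase_of_not_convexPos hR
  -- `x` lies in the triangle `(P.erase w).erase x`, which therefore contains `(P.erase z).erase w`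
  have hw' : w ∈ convexHull ℝ ↑((P.erase w).erase x) := by
    rw [Finset.coe_erase, convexHull_sdiff_singleton_of_mem (by rwa [← Finset.coe_erase])]
    exact convexHull_mono (Finset.coe_subset.2 (Finset.erase_subset_erase w (P.erase_subset z))) hw
  exact exists_convexPos_of_two_mem_convexHull hgp
    ((Finset.erase_subset _ _).trans (P.erase_subset w))
    (by rw [Finset.card_erase_of_mem hxR, Finset.card_erase_of_mem hwP, hcard]) hwP
    (Finset.mem_of_mem_erase hxR) (Finset.ne_of_mem_erase hxR).symm (by simp) (by simp) hw' hx
end
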